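/- There exist constants C > 0 and 1/2 < γ < 1 such that the growth function of the first Grigorchuk group G with respect to S = {a, b, c, d} satisfies γ_G^S(n) ≤ exp(C n^γ) for every n ∈ ℕ; in particular, G is of subexponential growth. -/

import Mathlib

/-!
Weight the generators so that every element has an alternating representative (the letter `a`
alternating with letters from the Klein group `{1, b, c, d}`) no heavier than any word for it.
For an alternating word the two first-level sections together weigh at most `5/6` of the word
plus a constant, and an element is determined by its root action and its two sections. Hence
the number `F x` of elements of weight at most `x` satisfies
`F x ≤ 2 * ∑_{j ≤ Y} F j * F (Y - j)` with `Y ≈ 5x/6`. Since `t ↦ t ^ (9/10)` is concave and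
`2 * (23/50) ^ (9/10) < 1`, strong induction gives `F x ≤ exp (100 * x ^ (9/10))`, and a word of
length `m` has weight at most `125 * m`.
-/

noncomputable section

/-! ### The Grigorchuk generators -/

namespace Grig

def aFun : List Bool → List Bool
  | [] => []
  | x :: w => (!x) :: w

mutual
  def bFun : List Bool → List Bool
    | [] => []
    | false :: w => false :: aFun w
    | true :: w => true :: cFun w
  def cFun : List Bool → List Bool
    | [] => []
    | false :: w => false :: aFun w
    | true :: w => true :: dFun w
  def dFun : List Bool → List Bool
    | [] => []
    | false :: w => false :: w
    | true :: w => true :: bFun w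
end

theorem aFun_involutive : Function.Involutive aFun := by
  intro w
  match w with
  | [] => rfl
  | x :: w => simp [aFun]

theorem bcd_involutive :
    ∀ w : List Bool, bFun (bFun w) = w ∧ cFun (cFun w) = w ∧ dFun (dFun w) = w := by
  intro w
  induction w with
  | nil => exact ⟨rfl, rfl, rfl⟩
  | cons x w ih =>
    rcases x with _ | _
    · simp [bFun, cFun, dFun, aFun_involutive w]
    · simp [bFun, cFun, dFun, ih.1, ih.2.1, ih.2.2]

theorem bFun_involutive : Function.Involutive bFun := fun w => (bcd_involutive w).1
theorem cFun_involutive : Function.Involutive cFun := fun w => (bcd_involutive w).2.1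
theorem dFun_involutive : Function.Involutive dFun := fun w => (bcd_involutive w).2.2

theorem aFun_length : ∀ w : List Bool, (aFun w).length = w.length := by
  intro w
  match w with
  | [] => rfl
  | x :: w => simp [aFun]

theorem bcd_length : ∀ w : List Bool,
    (bFun w).length = w.length ∧ (cFun w).length = w.length ∧ (dFun w).length = w.length := by
  intro w
  induction w with
  | nil => exact ⟨rfl, rfl, rfl⟩
  | cons x w ih =>
    rcases x with _ | _
    · simp [bFun, cFun, dFun, aFun_length w]
    · simp [bFun, cFun, dFun, ih.1, ih.2.1, ih.2.2]

theorem bFun_length : ∀ w, (bFun w).length = w.length := fun w => (bcd_length w).1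
theorem cFun_length : ∀ w, (cFun w).length = w.length := fun w => (bcd_length w).2.1
theorem dFun_length : ∀ w, (dFun w).length = w.length := fun w => (bcd_length w).2.2

/-- The generators of the first Grigorchuk group as permutations of the vertex set
`{0,1}*` of the rooted binary tree. -/
def aPerm : Equiv.Perm (List Bool) := aFun_involutive.toPerm
def bPerm : Equiv.Perm (List Bool) := bFun_involutive.toPerm
def cPerm : Equiv.Perm (List Bool) := cFun_involutive.toPerm
def dPerm : Equiv.Perm (List Bool) := dFun_involutive.toPerm

/-- The generating set `S = {a, b, c, d}` (a set of involutions). -/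
def Sset : Set (Equiv.Perm (List Bool)) := {aPerm, bPerm, cPerm, dPerm}

/-- The first Grigorchuk group. -/
def Grigorchuk : Subgroup (Equiv.Perm (List Bool)) := Subgroup.closure Sset

/-- Word length with respect to `S = {a, b, c, d}`. -/
def wordLength (g : Equiv.Perm (List Bool)) : ℕ :=
  sInf {k | ∃ l : List (Equiv.Perm (List Bool)),
    (∀ x ∈ l, x ∈ Sset) ∧ l.length = k ∧ l.prod = g}

/-- The growth function of the first Grigorchuk group with respect to `S`. -/
def growthGrig (m : ℕ) : ℕ :=
  Nat.card {g : Equiv.Perm (List Bool) |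
    ∃ l : List (Equiv.Perm (List Bool)), (∀ x ∈ l, x ∈ Sset) ∧ l.length ≤ m ∧ l.prod = g}

/-! ### Level transfer -/

def levelFun (n : ℕ) (f : List Bool → List Bool) (v : Fin n → Bool) : Fin n → Bool :=
  fun i => (f (List.ofFn v)).getD i false

theorem levelFun_involutive (n : ℕ) (f : List Bool → List Bool)
    (hlen : ∀ l, (f l).length = l.length) (hinv : Function.Involutive f) :
    Function.Involutive (levelFun n f) := by
  intro v
  have key : ∀ u : Fin n → Bool, List.ofFn (levelFun n f u) = f (List.ofFn u) := by
    intro u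
    apply List.ext_getElem
    · simp [hlen]
    · intro i h1 h2
      simp only [List.getElem_ofFn]
      simp [levelFun, List.getD_eq_getElem, h2]
  funext i
  simp only [levelFun, key v, hinv (List.ofFn v)]
  simp [List.getD_eq_getElem]

/-- The images `a_n, b_n, c_n, d_n` of the Grigorchuk generators in `Sym(X_n)`,
where the `n`-th level `X_n = {0,1}^n` is identified with `Fin n → Bool`. -/
def aLev (n : ℕ) : Equiv.Perm (Fin n → Bool) :=
  (levelFun_involutive n aFun aFun_length aFun_involutive).toPerm
def bLev (n : ℕ) : Equiv.Perm (Fin n → Bool) :=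
  (levelFun_involutive n bFun bFun_length bFun_involutive).toPerm
def cLev (n : ℕ) : Equiv.Perm (Fin n → Bool) :=
  (levelFun_involutive n cFun cFun_length cFun_involutive).toPerm
def dLev (n : ℕ) : Equiv.Perm (Fin n → Bool) :=
  (levelFun_involutive n dFun dFun_length dFun_involutive).toPerm

end Grig

theorem ncard_setOf_length_le_le (α : Type*) [Fintype α] (n : ℕ) :
    {w : List α | w.length ≤ n}.ncard ≤ (Fintype.card α + 1) ^ n := by
  have hinj : Set.InjOn (fun w : List α => fun i : Fin n => w[(i : ℕ)]?)
      {w | w.length ≤ n} := by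
    intro w hw w' hw' h
    rw [Set.mem_setOf_eq] at hw hw'
    refine List.ext_getElem? fun i => ?_
    by_cases hi : i < n
    · exact congrFun h ⟨i, hi⟩
    · rw [List.getElem?_eq_none (by omega), List.getElem?_eq_none (by omega)]
  have := Set.ncard_le_ncard_of_injOn _ (fun _ _ => Set.mem_univ _) hinj Set.finite_univ
  simpa [Nat.card_eq_fintype_card, Fintype.card_option] using this

namespace Grig

open Equiv

theorem bcd_klein_relations (w : List Bool) :
    bFun (cFun w) = dFun w ∧ cFun (dFun w) = bFun w ∧ dFun (bFun w) = cFun w := by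
  induction w with
  | nil => exact ⟨rfl, rfl, rfl⟩
  | cons x w ih =>
    cases x <;> simp [bFun, cFun, dFun, aFun_involutive w, ih.1, ih.2.1, ih.2.2]

@[simp] theorem aPerm_mul_self : aPerm * aPerm = 1 := Equiv.ext aFun_involutive
@[simp] theorem bPerm_mul_self : bPerm * bPerm = 1 := Equiv.ext bFun_involutive
@[simp] theorem cPerm_mul_self : cPerm * cPerm = 1 := Equiv.ext cFun_involutive
@[simp] theorem dPerm_mul_self : dPerm * dPerm = 1 := Equiv.ext dFun_involutive

@[simp] theorem bPerm_mul_cPerm : bPerm * cPerm = dPerm :=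
  Equiv.ext fun w => (bcd_klein_relations w).1
@[simp] theorem cPerm_mul_dPerm : cPerm * dPerm = bPerm :=
  Equiv.ext fun w => (bcd_klein_relations w).2.1
@[simp] theorem dPerm_mul_bPerm : dPerm * bPerm = cPerm :=
  Equiv.ext fun w => (bcd_klein_relations w).2.2

@[simp] theorem cPerm_mul_bPerm : cPerm * bPerm = dPerm := by
  rw [← dPerm_mul_bPerm, mul_assoc, bPerm_mul_self, mul_one]
@[simp] theorem dPerm_mul_cPerm : dPerm * cPerm = bPerm := by
  rw [← bPerm_mul_cPerm, mul_assoc, cPerm_mul_self, mul_one]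
@[simp] theorem bPerm_mul_dPerm : bPerm * dPerm = cPerm := by
  rw [← cPerm_mul_dPerm, mul_assoc, dPerm_mul_self, mul_one]

inductive Letter
  | a | b | c | d
  deriving DecidableEq

instance : Fintype Letter := ⟨{.a, .b, .c, .d}, fun s => by cases s <;> decide⟩

namespace Letter

def perm : Letter → Perm (List Bool)
  | a => aPerm
  | b => bPerm
  | c => cPerm
  | d => dPerm

def isA : Letter → Bool
  | a => true
  | _ => false

/-- The sections `s|₀, s|₁` of a generator: `b = (a, c)`, `c = (a, d)`, `d = (1, b)`. -/
def restrict : Letter → Bool → List Letter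
  | a, _ => []
  | b, x => cond x [c] [a]
  | c, x => cond x [d] [a]
  | d, x => cond x [b] []

/- The weights solve `weight (s|₀) + weight (s|₁) = 5/6 * (weight a + weight s)` for
`s = b, c, d`, which makes sections of alternating words shorter by the factor `5/6`. -/
def weight : Letter → ℕ
  | a => 91
  | b => 125
  | c => 89
  | d => 59

end Letter

def eval (w : List Letter) : Perm (List Bool) := (w.map Letter.perm).prod

@[simp] theorem eval_nil : eval [] = 1 := rfl

@[simp] theorem eval_cons (s : Letter) (w : List Letter) : eval (s :: w) = s.perm * eval w :=
  List.prod_cons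

theorem eval_append (u v : List Letter) : eval (u ++ v) = eval u * eval v := by
  simp [eval]

theorem Letter.perm_apply_cons (s : Letter) (x : Bool) (v : List Bool) :
    s.perm (x :: v) = xor x s.isA :: eval (s.restrict x) v := by
  cases s <;> cases x <;> rfl

/-- Whether `eval w` swaps the two subtrees below the root. -/
def rootAct (w : List Letter) : Bool := w.foldr (fun s x => xor s.isA x) false

/-- The section of `eval w` at the first-level vertex `x`, as a word. -/
def restrictWord : List Letter → Bool → List Letter
  | [], _ => []
  | s :: w, x => s.restrict (xor x (rootAct w)) ++ restrictWord w x

theorem eval_apply_cons (w : List Letter) (x : Bool) (v : List Bool) :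
    eval w (x :: v) = xor x (rootAct w) :: eval (restrictWord w x) v := by
  induction w with
  | nil => simp [rootAct, restrictWord]
  | cons s w ih =>
    simp only [eval_cons, Perm.mul_apply, ih, Letter.perm_apply_cons, restrictWord, eval_append]
    congr 1
    simp only [rootAct, List.foldr_cons]
    cases x <;> cases s.isA <;> simp

def weight (w : List Letter) : ℕ := (w.map Letter.weight).sum

@[simp] theorem weight_nil : weight [] = 0 := rfl

@[simp] theorem weight_cons (s : Letter) (w : List Letter) :
    weight (s :: w) = s.weight + weight w := List.sum_cons

theorem weight_append (u v : List Letter) : weight (u ++ v) = weight u + weight v := by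
  simp [weight]

theorem length_le_weight (w : List Letter) : w.length ≤ weight w := by
  induction w with
  | nil => rfl
  | cons s w ih =>
    have : 1 ≤ s.weight := by cases s <;> simp [Letter.weight]
    rw [List.length_cons, weight_cons]
    omega

theorem weight_le_mul_length (w : List Letter) : weight w ≤ 125 * w.length := by
  induction w with
  | nil => rfl
  | cons s w ih =>
    have : s.weight ≤ 125 := by cases s <;> simp [Letter.weight]
    rw [List.length_cons, weight_cons]
    omega

/-- Prepend a letter, cancelling `a a = 1` and merging inside the Klein group `{1, b, c, d}`. -/
def reduceCons : Letter → List Letter → List Letter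
  | s, [] => [s]
  | .a, .a :: r => r
  | .b, .b :: r => r
  | .b, .c :: r => .d :: r
  | .b, .d :: r => .c :: r
  | .c, .b :: r => .d :: r
  | .c, .c :: r => r
  | .c, .d :: r => .b :: r
  | .d, .b :: r => .c :: r
  | .d, .c :: r => .b :: r
  | .d, .d :: r => r
  | s, r => s :: r

def reduce (w : List Letter) : List Letter := w.foldr reduceCons []

def IsAlternating (w : List Letter) : Prop := w.IsChain fun s t => s.isA ≠ t.isA

theorem eval_reduceCons (s : Letter) (r : List Letter) :
    eval (reduceCons s r) = s.perm * eval r := by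
  rcases r with _ | ⟨t, r⟩
  · simp [reduceCons]
  · cases s <;> cases t <;> simp [reduceCons, Letter.perm, ← mul_assoc]

theorem weight_reduceCons_le (s : Letter) (r : List Letter) :
    weight (reduceCons s r) ≤ s.weight + weight r := by
  rcases r with _ | ⟨t, r⟩
  · simp [reduceCons]
  · cases s <;> cases t <;> simp only [reduceCons, weight_cons, Letter.weight] <;> omega

theorem IsAlternating.reduceCons (s : Letter) {r : List Letter} (hr : IsAlternating r) :
    IsAlternating (reduceCons s r) := by
  rcases r with _ | ⟨t, r⟩
  · exact List.isChain_singleton s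
  have hr' : IsAlternating r := hr.tail
  have hhead : ∀ u, u.isA = t.isA → IsAlternating (u :: r) := by
    rintro u hu
    rcases r with _ | ⟨v, r⟩
    · exact List.isChain_singleton u
    · exact List.isChain_cons_cons.2 ⟨hu ▸ (List.isChain_cons_cons.1 hr).1, hr'⟩
  cases s <;> cases t <;>
    first
    | exact hr'
    | exact hhead _ rfl
    | exact List.isChain_cons_cons.2 ⟨by decide, hr⟩

@[simp] theorem eval_reduce (w : List Letter) : eval (reduce w) = eval w := by
  induction w with
  | nil => rfl
  | cons s w ih => simp [reduce, eval_reduceCons, ← ih]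

theorem weight_reduce_le (w : List Letter) : weight (reduce w) ≤ weight w := by
  induction w with
  | nil => rfl
  | cons s w ih => exact (weight_reduceCons_le s (reduce w)).trans (by simpa using ih)

theorem isAlternating_reduce (w : List Letter) : IsAlternating (reduce w) := by
  induction w with
  | nil => exact List.isChain_nil
  | cons s w ih => exact ih.reduceCons s

def sectionWeight (s : Letter) : ℕ := weight (s.restrict false) + weight (s.restrict true)

theorem weight_restrictWord_add (w : List Letter) :
    weight (restrictWord w false) + weight (restrictWord w true) =
      (w.map sectionWeight).sum := by
  induction w with
  | nil => rfl
  | cons s w ih =>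
    simp only [restrictWord, weight_append, List.map_cons, List.sum_cons, ← ih,
      sectionWeight]
    cases rootAct w <;>
      simp only [Bool.false_xor, Bool.true_xor, Bool.not_false, Bool.not_true] <;> omega

theorem six_mul_sum_sectionWeight_le :
    ∀ w : List Letter, IsAlternating w →
      6 * (w.map sectionWeight).sum ≤ 5 * weight w + 1080
  | [], _ => by simp
  | [s], _ => by cases s <;> simp [sectionWeight, Letter.restrict, Letter.weight]
  | s :: t :: w, h => by
    have ih := six_mul_sum_sectionWeight_le w h.tail.tail
    have hst : s.isA ≠ t.isA := (List.isChain_cons_cons.1 h).1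
    have hpair : 6 * (sectionWeight s + sectionWeight t) ≤ 5 * (s.weight + t.weight) := by
      cases s <;> cases t <;> simp_all [sectionWeight, Letter.restrict, Letter.weight, Letter.isA]
    simp only [List.map_cons, List.sum_cons, weight_cons]
    omega

theorem six_mul_weight_restrictWord_le {w : List Letter} (hw : IsAlternating w) :
    6 * (weight (restrictWord w false) + weight (restrictWord w true)) ≤ 5 * weight w + 1080 :=
  weight_restrictWord_add w ▸ six_mul_sum_sectionWeight_le w hw

def ofSections (flip : Bool) (g₀ g₁ : List Bool → List Bool) : List Bool → List Bool
  | [] => []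
  | x :: v => xor x flip :: cond x (g₁ v) (g₀ v)

theorem eval_apply_nil (w : List Letter) : eval w [] = [] := by
  induction w with
  | nil => rfl
  | cons s w ih => cases s <;> simp only [eval_cons, Perm.mul_apply, ih] <;> rfl

theorem coe_eval_eq_ofSections (w : List Letter) :
    ⇑(eval w) =
      ofSections (rootAct w) (eval (restrictWord w false)) (eval (restrictWord w true)) := by
  funext v
  rcases v with _ | ⟨x, v⟩
  · simp [ofSections, eval_apply_nil]
  · cases x <;> simp [ofSections, eval_apply_cons]

/-- The elements of weight at most `x`; alternating representatives suffice by `reduce`. -/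
def weightBall (x : ℕ) : Set (List Bool → List Bool) :=
  {g | ∃ w, IsAlternating w ∧ weight w ≤ x ∧ ⇑(eval w) = g}

theorem weightBall_subset_image (x : ℕ) :
    weightBall x ⊆ (fun w => ⇑(eval w)) '' {w | w.length ≤ x} := by
  rintro _ ⟨w, -, hwx, rfl⟩
  exact ⟨w, (length_le_weight w).trans hwx, rfl⟩

theorem weightBall_finite (x : ℕ) : (weightBall x).Finite :=
  ((List.finite_length_le Letter x).image _).subset (weightBall_subset_image x)

theorem ncard_weightBall_le_pow (x : ℕ) : (weightBall x).ncard ≤ 5 ^ x :=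
  calc (weightBall x).ncard
      ≤ ((fun w => ⇑(eval w)) '' {w : List Letter | w.length ≤ x}).ncard :=
        Set.ncard_le_ncard (weightBall_subset_image x)
          ((List.finite_length_le Letter x).image _)
    _ ≤ {w : List Letter | w.length ≤ x}.ncard :=
        Set.ncard_image_le (List.finite_length_le Letter x)
    _ ≤ 5 ^ x := ncard_setOf_length_le_le Letter x

theorem weightBall_subset_image_ofSections {x Y : ℕ} (hY : 5 * x + 1080 ≤ 6 * Y) :
    weightBall x ⊆ (fun p : Bool × (List Bool → List Bool) × (List Bool → List Bool) =>
        ofSections p.1 p.2.1 p.2.2) ''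
      (Set.univ ×ˢ ⋃ j ∈ Finset.range (Y + 1), weightBall j ×ˢ weightBall (Y - j)) := by
  rintro _ ⟨w, hw, hwx, rfl⟩
  set u₀ := reduce (restrictWord w false)
  set u₁ := reduce (restrictWord w true)
  have hu : weight u₀ + weight u₁ ≤ Y := by
    have h₀ : weight u₀ ≤ weight (restrictWord w false) := weight_reduce_le _
    have h₁ : weight u₁ ≤ weight (restrictWord w true) := weight_reduce_le _
    have := six_mul_weight_restrictWord_le hw
    omega
  refine ⟨(rootAct w, eval u₀, eval u₁), ⟨trivial, ?_⟩, ?_⟩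
  · refine Set.mem_biUnion (x := weight u₀) (by simp; omega) ⟨?_, ?_⟩
    · exact ⟨u₀, isAlternating_reduce _, le_rfl, rfl⟩
    · exact ⟨u₁, isAlternating_reduce _, by omega, rfl⟩
  · simp [u₀, u₁, coe_eval_eq_ofSections w]

theorem ncard_weightBall_le_sum {x Y : ℕ} (hY : 5 * x + 1080 ≤ 6 * Y) :
    (weightBall x).ncard ≤
      2 * ∑ j ∈ Finset.range (Y + 1), (weightBall j).ncard * (weightBall (Y - j)).ncard := by
  set U := ⋃ j ∈ Finset.range (Y + 1), weightBall j ×ˢ weightBall (Y - j)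
  have hU : U.Finite := (Finset.range (Y + 1)).finite_toSet.biUnion fun j _ =>
    (weightBall_finite j).prod (weightBall_finite (Y - j))
  calc (weightBall x).ncard
      ≤ ((fun p : Bool × (List Bool → List Bool) × (List Bool → List Bool) =>
          ofSections p.1 p.2.1 p.2.2) '' (Set.univ ×ˢ U)).ncard :=
        Set.ncard_le_ncard (weightBall_subset_image_ofSections hY)
          ((Set.finite_univ.prod hU).image _)
    _ ≤ (Set.univ ×ˢ U).ncard := Set.ncard_image_le (Set.finite_univ.prod hU)
    _ = 2 * U.ncard := by simp [Set.ncard_prod]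
    _ ≤ 2 * ∑ j ∈ Finset.range (Y + 1), (weightBall j ×ˢ weightBall (Y - j)).ncard := by
        gcongr
        exact Finset.set_ncard_biUnion_le _ _
    _ = _ := by simp only [Set.ncard_prod]

end Grig

section Analysis

open Real Filter Topology

theorem add_rpow_le_two_mul_rpow_half {p a b : ℝ} (hp₀ : 0 ≤ p) (hp₁ : p ≤ 1)
    (ha : 0 ≤ a) (hb : 0 ≤ b) : a ^ p + b ^ p ≤ 2 * ((a + b) / 2) ^ p := by
  have h := (concaveOn_rpow hp₀ hp₁).2 (Set.mem_Ici.2 ha) (Set.mem_Ici.2 hb)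
    (by norm_num : (0 : ℝ) ≤ 1 / 2) (by norm_num : (0 : ℝ) ≤ 1 / 2) (by norm_num)
  simp only [smul_eq_mul] at h
  rw [show 1 / 2 * a + 1 / 2 * b = (a + b) / 2 by ring] at h
  linarith

theorem exists_pow_ten_eq_and_rpow_eq {x : ℝ} (hx : 0 ≤ x) :
    ∃ y : ℝ, 0 ≤ y ∧ y ^ 10 = x ∧ x ^ (9 / 10 : ℝ) = y ^ 9 := by
  refine ⟨x ^ (1 / 10 : ℝ), by positivity, ?_, ?_⟩ <;>
    rw [← rpow_mul_natCast hx] <;> norm_num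

theorem rpow_add_rpow_le_of_add_le {j k x : ℝ} (hj : 0 ≤ j) (hk : 0 ≤ k)
    (h : j + k ≤ 23 / 25 * x) :
    100 * j ^ (9 / 10 : ℝ) + 100 * k ^ (9 / 10 : ℝ) ≤ 199 / 2 * x ^ (9 / 10 : ℝ) := by
  have hx : 0 ≤ x := by linarith
  have hconst : (23 / 50 : ℝ) ^ (9 / 10 : ℝ) ≤ 199 / 400 := by
    refine le_of_pow_le_pow_left₀ (n := 10) (by norm_num) (by norm_num) ?_
    rw [← rpow_natCast, ← rpow_mul (by norm_num)]
    norm_num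
  calc 100 * j ^ (9 / 10 : ℝ) + 100 * k ^ (9 / 10 : ℝ)
      ≤ 200 * ((j + k) / 2) ^ (9 / 10 : ℝ) := by
        linarith [add_rpow_le_two_mul_rpow_half (p := 9 / 10) (by norm_num) (by norm_num) hj hk]
    _ ≤ 200 * (23 / 50 * x) ^ (9 / 10 : ℝ) := by
        gcongr
        linarith
    _ = 200 * (23 / 50 : ℝ) ^ (9 / 10 : ℝ) * x ^ (9 / 10 : ℝ) := by
        rw [mul_rpow (by norm_num) hx, mul_assoc]
    _ ≤ 199 / 2 * x ^ (9 / 10 : ℝ) := by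
        gcongr
        linarith

theorem five_pow_le_exp_rpow {x : ℕ} (hx : x ≤ 2100) :
    (5 : ℝ) ^ x ≤ exp (100 * (x : ℝ) ^ (9 / 10 : ℝ)) := by
  obtain ⟨y, hy, hy10, hy9⟩ := exists_pow_ten_eq_and_rpow_eq (Nat.cast_nonneg x)
  have hy25 : y ≤ 25 := by
    refine le_of_pow_le_pow_left₀ (n := 10) (by norm_num) (by norm_num) ?_
    rw [hy10]
    calc (x : ℝ) ≤ 2100 := by exact_mod_cast hx
      _ ≤ 25 ^ 10 := by norm_num
  calc (5 : ℝ) ^ x ≤ exp 4 ^ x := by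
        gcongr
        linarith [add_one_le_exp 4]
    _ = exp (4 * y ^ 10) := by rw [← exp_nat_mul, hy10, mul_comm]
    _ ≤ exp (100 * (x : ℝ) ^ (9 / 10 : ℝ)) := by
        rw [hy9, exp_le_exp]
        nlinarith [pow_nonneg hy 9]

theorem two_mul_le_exp_rpow_div_two {x : ℝ} (hx : 2100 ≤ x) :
    2 * x ≤ exp (x ^ (9 / 10 : ℝ) / 2) := by
  obtain ⟨y, hy, rfl, hy9⟩ := exists_pow_ten_eq_and_rpow_eq (by linarith : 0 ≤ x)
  have hy8 : 16 ≤ y ^ 8 := by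
    have : 3 / 2 ≤ y := le_of_pow_le_pow_left₀ (n := 10) (by norm_num) hy (by linarith)
    calc (16 : ℝ) ≤ (3 / 2) ^ 8 := by norm_num
      _ ≤ y ^ 8 := by gcongr
  calc 2 * y ^ 10 ≤ (y ^ 9 / 2) ^ 2 / 2 := by nlinarith [pow_nonneg hy 10]
    _ ≤ exp (y ^ 9 / 2) := by
        simpa using pow_div_factorial_le_exp (x := y ^ 9 / 2) (by positivity) 2
    _ = exp ((y ^ 10) ^ (9 / 10 : ℝ) / 2) := by rw [hy9]

theorem le_exp_rpow_of_le_two_mul_sum {f : ℕ → ℕ} (hpow : ∀ x, f x ≤ 5 ^ x)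
    (hrec : ∀ x, 2100 < x → ∃ Y, 25 * Y ≤ 23 * x ∧
      f x ≤ 2 * ∑ j ∈ Finset.range (Y + 1), f j * f (Y - j)) (x : ℕ) :
    (f x : ℝ) ≤ exp (100 * (x : ℝ) ^ (9 / 10 : ℝ)) := by
  induction x using Nat.strong_induction_on with
  | _ x ih =>
  rcases le_or_gt x 2100 with hsmall | hbig
  · exact (Nat.cast_le.2 (hpow x)).trans (by simpa using five_pow_le_exp_rpow hsmall)
  obtain ⟨Y, hYx, hfx⟩ := hrec x hbig
  set E := exp (199 / 2 * (x : ℝ) ^ (9 / 10 : ℝ))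
  have hterm : ∀ j ∈ Finset.range (Y + 1), (f j : ℝ) * f (Y - j) ≤ E := by
    intro j hj
    have hjY : j ≤ Y := Finset.mem_range_succ_iff.1 hj
    have hsum : (j : ℝ) + (Y - j : ℕ) ≤ 23 / 25 * x := by
      rw [← Nat.cast_add, Nat.add_sub_cancel' hjY]
      have : (25 * Y : ℝ) ≤ 23 * x := by exact_mod_cast hYx
      linarith
    calc (f j : ℝ) * f (Y - j)
        ≤ exp (100 * (j : ℝ) ^ (9 / 10 : ℝ)) * exp (100 * ((Y - j : ℕ) : ℝ) ^ (9 / 10 : ℝ)) :=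
          mul_le_mul (ih j (by omega)) (ih (Y - j) (by omega)) (by positivity) (by positivity)
      _ ≤ E := by
          rw [← exp_add, exp_le_exp]
          exact rpow_add_rpow_le_of_add_le (Nat.cast_nonneg _) (Nat.cast_nonneg _) hsum
  have hYx' : ((Y + 1 : ℕ) : ℝ) ≤ x := by exact_mod_cast (by omega : Y + 1 ≤ x)
  calc (f x : ℝ)
      ≤ 2 * ∑ j ∈ Finset.range (Y + 1), (f j : ℝ) * f (Y - j) := by exact_mod_cast hfx
    _ ≤ 2 * ((Y + 1 : ℕ) * E) := by
        gcongr
        simpa using Finset.sum_le_card_nsmul _ _ _ hterm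
    _ ≤ 2 * x * E := by nlinarith [exp_pos (199 / 2 * (x : ℝ) ^ (9 / 10 : ℝ))]
    _ ≤ exp ((x : ℝ) ^ (9 / 10 : ℝ) / 2) * E := by
        gcongr
        exact two_mul_le_exp_rpow_div_two (by exact_mod_cast hbig.le)
    _ = exp (100 * (x : ℝ) ^ (9 / 10 : ℝ)) := by rw [← exp_add]; ring_nf

theorem tendsto_rpow_one_div_of_le_exp_rpow {u : ℕ → ℝ} {C γ : ℝ} (hγ : γ < 1)
    (hu₁ : ∀ m, 1 ≤ u m) (hu : ∀ m, u m ≤ exp (C * (m : ℝ) ^ γ)) :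
    Tendsto (fun m : ℕ => u m ^ (1 / (m : ℝ))) atTop (𝓝 1) := by
  have hlim : Tendsto (fun m : ℕ => exp (C * (m : ℝ) ^ (γ - 1))) atTop (𝓝 1) := by
    have h : Tendsto (fun m : ℕ => C * (m : ℝ) ^ (γ - 1)) atTop (𝓝 0) := by
      simpa using ((tendsto_rpow_neg_atTop (sub_pos.2 hγ)).comp
        tendsto_natCast_atTop_atTop).const_mul C
    simpa [Function.comp_def] using (continuous_exp.tendsto 0).comp h
  refine tendsto_of_tendsto_of_tendsto_of_le_of_le' tendsto_const_nhds hlim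
    (Eventually.of_forall fun m => one_le_rpow (hu₁ m) (by positivity)) ?_
  filter_upwards [eventually_gt_atTop 0] with m hm
  have hm' : (0 : ℝ) < m := by exact_mod_cast hm
  calc u m ^ (1 / (m : ℝ)) ≤ exp (C * (m : ℝ) ^ γ) ^ (1 / (m : ℝ)) :=
        rpow_le_rpow (by linarith [hu₁ m]) (hu m) (by positivity)
    _ = exp (C * (m : ℝ) ^ (γ - 1)) := by
        rw [← exp_mul, rpow_sub_one hm'.ne']
        ring_nf

end Analysis

namespace Grig

open Real

theorem Sset_subset_range_perm : Sset ⊆ Set.range Letter.perm := by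
  rintro g (rfl | rfl | rfl | rfl)
  exacts [⟨.a, rfl⟩, ⟨.b, rfl⟩, ⟨.c, rfl⟩, ⟨.d, rfl⟩]

theorem coe_mem_weightBall {m : ℕ} {g : Equiv.Perm (List Bool)}
    (hg : ∃ l : List (Equiv.Perm (List Bool)), (∀ x ∈ l, x ∈ Sset) ∧ l.length ≤ m ∧ l.prod = g) :
    ⇑g ∈ weightBall (125 * m) := by
  obtain ⟨l, hlS, hlm, rfl⟩ := hg
  obtain ⟨w, rfl⟩ : l ∈ Set.range (List.map Letter.perm) := by
    rw [Set.range_list_map]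
    exact fun x hx => Sset_subset_range_perm (hlS x hx)
  refine ⟨reduce w, isAlternating_reduce w, ?_, by rw [eval_reduce]; rfl⟩
  calc weight (reduce w) ≤ weight w := weight_reduce_le w
    _ ≤ 125 * w.length := weight_le_mul_length w
    _ ≤ 125 * m := by simpa using hlm

theorem growthGrig_le_ncard_weightBall (m : ℕ) :
    growthGrig m ≤ (weightBall (125 * m)).ncard := by
  rw [growthGrig, Nat.card_coe_set_eq, ← Set.ncard_image_of_injective _ DFunLike.coe_injective]
  exact Set.ncard_le_ncard (Set.image_subset_iff.2 fun g hg => coe_mem_weightBall hg)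
    (weightBall_finite _)

theorem one_le_growthGrig (m : ℕ) : 1 ≤ growthGrig m := by
  rw [growthGrig, Nat.card_coe_set_eq, Nat.one_le_iff_ne_zero, Ne,
    Set.ncard_eq_zero (Set.Finite.of_finite_image ?_ DFunLike.coe_injective.injOn)]
  · exact Set.nonempty_iff_ne_empty.1 ⟨1, [], by simp⟩
  · exact (weightBall_finite (125 * m)).subset
      (Set.image_subset_iff.2 fun g hg => coe_mem_weightBall hg)

theorem ncard_weightBall_le_exp (x : ℕ) :
    ((weightBall x).ncard : ℝ) ≤ exp (100 * (x : ℝ) ^ (9 / 10 : ℝ)) :=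
  le_exp_rpow_of_le_two_mul_sum ncard_weightBall_le_pow (fun n hn =>
    ⟨(5 * n + 1085) / 6, by omega, ncard_weightBall_le_sum (by omega)⟩) x

theorem growthGrig_le_exp (m : ℕ) :
    (growthGrig m : ℝ) ≤ exp (12500 * (m : ℝ) ^ (9 / 10 : ℝ)) := by
  have h125 : (125 : ℝ) ^ (9 / 10 : ℝ) ≤ 125 :=
    rpow_le_self_of_one_le (by norm_num) (by norm_num)
  calc (growthGrig m : ℝ) ≤ (weightBall (125 * m)).ncard := by
        exact_mod_cast growthGrig_le_ncard_weightBall m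
    _ ≤ exp (100 * ((125 * m : ℕ) : ℝ) ^ (9 / 10 : ℝ)) := ncard_weightBall_le_exp _
    _ ≤ exp (12500 * (m : ℝ) ^ (9 / 10 : ℝ)) := by
        rw [exp_le_exp, Nat.cast_mul, mul_rpow (by norm_num) (Nat.cast_nonneg m)]
        push_cast
        nlinarith [rpow_nonneg (Nat.cast_nonneg m) (9 / 10 : ℝ)]

end Grig

/-- **Grigorchuk's theorem:** the first Grigorchuk group has subexponential growth.
More precisely, there are constants `C > 0` and `1/2 < γ < 1` with
`γ_𝒢^S(m) ≤ exp(C m^γ)` for every `m`; in particular the growth is subexponential,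
i.e. `γ_𝒢^S(m)^{1/m} → 1`. -/
theorem grigorchuk_subexponential_growth :
    ∃ C : ℝ, 0 < C ∧ ∃ γ : ℝ, 1 / 2 < γ ∧ γ < 1 ∧
      (∀ m : ℕ, (Grig.growthGrig m : ℝ) ≤ Real.exp (C * (m : ℝ) ^ γ)) ∧
      Filter.Tendsto (fun m : ℕ => (Grig.growthGrig m : ℝ) ^ (1 / (m : ℝ)))
        Filter.atTop (nhds 1) :=
  ⟨12500, by norm_num, 9 / 10, by norm_num, by norm_num, Grig.growthGrig_le_exp,
    tendsto_rpow_one_div_of_le_exp_rpow (by norm_num)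
      (fun m => by exact_mod_cast Grig.one_le_growthGrig m) Grig.growthGrig_le_exp⟩
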